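/- For every ε > 0 and every α ∈ [0,1], the maximum over t ∈ [−1,1] of σ²_H(t,ε,α) equals: α·[ (e^{ε/2}+3)/(3(e^{ε/2}−1)²) − ((e^ε+1)/(e^ε−1))² + e^{ε/2}/(e^{ε/2}−1) ] + 4e^ε/(e^ε−1)² if α > 1 − e^{−ε/2}, and α·[ (e^{ε/2}+3)/(3(e^{ε/2}−1)²) − ((e^ε+1)/(e^ε−1))² ] + ((e^ε+1)/(e^ε−1))² if α ≤ 1 − e^{−ε/2}. -/
import Mathlib


open Real

/-- noise variance of the Piecewise Mechanism on input `t` with privacy budget `ε`. -/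
noncomputable def pmVar (t ε : ℝ) : ℝ :=
  t ^ 2 / (exp (ε / 2) - 1) + (exp (ε / 2) + 3) / (3 * (exp (ε / 2) - 1) ^ 2)

/-- noise variance of Duchi et al.'s one-dimensional mechanism on input `t`. -/
noncomputable def duchiVar (t ε : ℝ) : ℝ := ((exp ε + 1) / (exp ε - 1)) ^ 2 - t ^ 2

/-- noise variance of the Hybrid Mechanism (PM with probability `α`, Duchi with `1−α`). -/
noncomputable def hmVar (t ε α : ℝ) : ℝ := α * pmVar t ε + (1 - α) * duchiVar t ε

/-- Closed form of the maximum over `t ∈ [−1,1]` of the Hybrid Mechanism's noise variance. -/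
theorem stmt_10 (ε : ℝ) (hε : 0 < ε) (α : ℝ) (hα : α ∈ Set.Icc (0 : ℝ) 1) :
    IsGreatest ((fun t => hmVar t ε α) '' Set.Icc (-1 : ℝ) 1)
      (if α > 1 - exp (-(ε / 2)) then
        α * ((exp (ε / 2) + 3) / (3 * (exp (ε / 2) - 1) ^ 2) -
            ((exp ε + 1) / (exp ε - 1)) ^ 2 + exp (ε / 2) / (exp (ε / 2) - 1)) +
          4 * exp ε / (exp ε - 1) ^ 2
      else
        α * ((exp (ε / 2) + 3) / (3 * (exp (ε / 2) - 1) ^ 2) -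
            ((exp ε + 1) / (exp ε - 1)) ^ 2) +
          ((exp ε + 1) / (exp ε - 1)) ^ 2) := by
  have hA : 1 < exp (ε / 2) := by
    rw [Real.one_lt_exp_iff]; linarith
  have hB : 1 < exp ε := by rw [Real.one_lt_exp_iff]; linarith
  have h1 : (0:ℝ) < exp (ε / 2) - 1 := by linarith
  have h2 : (0:ℝ) < exp ε - 1 := by linarith
  have hAinv : exp (ε / 2) * exp (-(ε / 2)) = 1 := by
    rw [← exp_add]; simp
  set c : ℝ := α / (exp (ε / 2) - 1) - (1 - α) with hc
  have key : ∀ t : ℝ, hmVar t ε α = c * t ^ 2 + hmVar 0 ε α := by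
    intro t
    simp only [hmVar, pmVar, duchiVar, hc]
    field_simp
    ring
  have hcond : (α > 1 - exp (-(ε / 2))) ↔ 0 < c := by
    rw [hc]
    rw [sub_pos, lt_div_iff₀ h1]
    constructor
    · intro h
      nlinarith [exp_pos (-(ε / 2))]
    · intro h
      nlinarith [exp_pos (-(ε / 2)), exp_pos (ε / 2)]
  by_cases hp : α > 1 - exp (-(ε / 2))
  · rw [if_pos hp]
    have hc0 : 0 < c := hcond.mp hp
    have hval : hmVar 1 ε α =
        α * ((exp (ε / 2) + 3) / (3 * (exp (ε / 2) - 1) ^ 2) -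
            ((exp ε + 1) / (exp ε - 1)) ^ 2 + exp (ε / 2) / (exp (ε / 2) - 1)) +
          4 * exp ε / (exp ε - 1) ^ 2 := by
      simp only [hmVar, pmVar, duchiVar]
      field_simp
      ring
    constructor
    · exact ⟨1, by norm_num, hval⟩
    · rintro y ⟨t, ht, rfl⟩
      simp only
      rw [← hval, key t, key 1]
      have ht2 : t ^ 2 ≤ 1 := by nlinarith [ht.1, ht.2]
      nlinarith
  · rw [if_neg hp]
    have hc0 : c ≤ 0 := by
      by_contra h
      exact hp (hcond.mpr (lt_of_not_ge h))
    have hval : hmVar 0 ε α =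
        α * ((exp (ε / 2) + 3) / (3 * (exp (ε / 2) - 1) ^ 2) -
            ((exp ε + 1) / (exp ε - 1)) ^ 2) +
          ((exp ε + 1) / (exp ε - 1)) ^ 2 := by
      simp only [hmVar, pmVar, duchiVar]
      field_simp
      ring
    constructor
    · exact ⟨0, by norm_num, hval⟩
    · rintro y ⟨t, ht, rfl⟩
      simp only
      rw [← hval, key t]
      nlinarith [sq_nonneg t]
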